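/- Suppose k, n, m are positive integers with k ≥ 150, n − m ≥ 2, a1, a2 ∈ {1,…,9}, and Q_k = a1·(10^n−1)/9 − a2·(10^m−1)/9. Then |9·10^{−n}·α^k/a1 − 1| ≤ 21/10^{n−m}, where α = 1 + √2. -/

import Mathlib

/-!
Binet's formula gives `9 αᵏ = a₁ 10ⁿ - (a₂ (10ᵐ - 1) + a₁ + 9 βᵏ)`, and `|β| < 1`, so after dividing
by `a₁ 10ⁿ` the error term is at most `(9 · 10ᵐ + a₁) / (a₁ 10ⁿ) ≤ 10 / 10ⁿ⁻ᵐ`.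
-/

/-- The Pell-Lucas sequence: `Q 0 = Q 1 = 2`, `Q (n+2) = 2 * Q (n+1) + Q n`. -/
def pellLucas : ℕ → ℕ
  | 0 => 2
  | 1 => 2
  | n + 2 => 2 * pellLucas (n + 1) + pellLucas n

lemma pellLucas_eq_add_pow (k : ℕ) : (pellLucas k : ℝ) = (1 + √2) ^ k + (1 - √2) ^ k := by
  have h2 : √2 ^ 2 = 2 := Real.sq_sqrt zero_le_two
  induction k using Nat.twoStepInduction with
  | zero => norm_num [pellLucas]
  | one => simp only [pellLucas]; ring
  | more n ih₁ ih₂ =>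
    rw [pellLucas, Nat.cast_add, Nat.cast_mul, ih₁, ih₂]
    linear_combination (-((1 + √2) ^ n + (1 - √2) ^ n)) * h2

lemma abs_one_sub_sqrt_two_pow_le_one (k : ℕ) : |(1 - √2) ^ k| ≤ 1 := by
  have h2 : √2 ^ 2 = 2 := Real.sq_sqrt zero_le_two
  rw [abs_pow]
  refine pow_le_one₀ (abs_nonneg _) (abs_le.mpr ⟨?_, ?_⟩) <;>
    nlinarith [Real.sqrt_nonneg 2]

lemma nine_mul_repunit (j : ℕ) : (9 : ℤ) * ((10 ^ j - 1) / 9) = 10 ^ j - 1 :=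
  Int.mul_ediv_cancel' (by simpa using sub_one_dvd_pow_sub_one (10 : ℤ) j)

lemma nine_mul_add_pow_of_pellLucas_eq {k n m a₁ a₂ : ℕ}
    (h : (pellLucas k : ℤ) = a₁ * ((10 ^ n - 1) / 9) - a₂ * ((10 ^ m - 1) / 9)) :
    9 * ((1 + √2) ^ k + (1 - √2) ^ k) = (a₁ : ℝ) * (10 ^ n - 1) - a₂ * (10 ^ m - 1) := by
  have hℤ : 9 * (pellLucas k : ℤ) = a₁ * (10 ^ n - 1) - a₂ * (10 ^ m - 1) := by
    rw [h]
    linear_combination (a₁ : ℤ) * nine_mul_repunit n - (a₂ : ℤ) * nine_mul_repunit m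
  rw [← pellLucas_eq_add_pow]
  exact_mod_cast hℤ

section LinearForm

variable {x y a₁ a₂ : ℝ} {m n : ℕ}

lemma nine_mul_div_sub_one_eq (ha₁ : a₁ ≠ 0)
    (h : 9 * (x + y) = a₁ * (10 ^ n - 1) - a₂ * (10 ^ m - 1)) :
    9 * x / (a₁ * 10 ^ n) - 1 = -(a₂ * (10 ^ m - 1) + a₁ + 9 * y) / (a₁ * 10 ^ n) := by
  field_simp
  linear_combination h

lemma abs_mul_ten_pow_sub_one_add_le (ha₁ : 0 ≤ a₁) (ha₂ : 0 ≤ a₂) (ha₂' : a₂ ≤ 9) (hy : |y| ≤ 1) :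
    |a₂ * (10 ^ m - 1) + a₁ + 9 * y| ≤ 9 * 10 ^ m + a₁ := by
  have h10 : (1 : ℝ) ≤ 10 ^ m := one_le_pow₀ (by norm_num)
  have hy' := abs_le.mp hy
  rw [abs_le]
  constructor <;> nlinarith

lemma abs_nine_mul_div_sub_one_le (hmn : m ≤ n) (ha₁ : 1 ≤ a₁) (ha₂ : 0 ≤ a₂) (ha₂' : a₂ ≤ 9)
    (hy : |y| ≤ 1) (h : 9 * (x + y) = a₁ * (10 ^ n - 1) - a₂ * (10 ^ m - 1)) :
    |9 * x / (a₁ * 10 ^ n) - 1| ≤ 10 / 10 ^ (n - m) := by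
  have hpow : (10 : ℝ) ^ n = 10 ^ (n - m) * 10 ^ m := by rw [← pow_add, Nat.sub_add_cancel hmn]
  have h10 : (1 : ℝ) ≤ 10 ^ m := one_le_pow₀ (by norm_num)
  have hden : 0 < a₁ * 10 ^ n := by positivity
  rw [nine_mul_div_sub_one_eq (by positivity) h, abs_div, abs_neg, abs_of_pos hden,
    div_le_div_iff₀ hden (by positivity)]
  calc |a₂ * (10 ^ m - 1) + a₁ + 9 * y| * 10 ^ (n - m)
      ≤ (9 * 10 ^ m + a₁) * 10 ^ (n - m) := by
        gcongr
        exact abs_mul_ten_pow_sub_one_add_le (by positivity) ha₂ ha₂' hy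
    _ ≤ (10 * a₁ * 10 ^ m) * 10 ^ (n - m) := by gcongr; nlinarith
    _ = 10 * (a₁ * 10 ^ n) := by rw [hpow]; ring

end LinearForm

theorem pellLucas_linear_form_bound_one_general (k n m a1 a2 : ℕ) (hnm : m + 2 ≤ n)
    (ha11 : 1 ≤ a1) (ha29 : a2 ≤ 9)
    (heq : (pellLucas k : ℤ) = (a1 : ℤ) * ((10 ^ n - 1) / 9) - (a2 : ℤ) * ((10 ^ m - 1) / 9)) :
    |9 * (10 : ℝ) ^ (-(n : ℤ)) * (1 + Real.sqrt 2) ^ k / (a1 : ℝ) - 1| ≤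
      21 / 10 ^ (n - m) := by
  have hrw : 9 * (10 : ℝ) ^ (-(n : ℤ)) * (1 + √2) ^ k / a1 = 9 * (1 + √2) ^ k / (a1 * 10 ^ n) := by
    rw [zpow_neg, zpow_natCast]
    ring
  rw [hrw]
  calc _ ≤ 10 / 10 ^ (n - m) :=
        abs_nine_mul_div_sub_one_le (by omega) (by exact_mod_cast ha11) a2.cast_nonneg
          (by exact_mod_cast ha29) (abs_one_sub_sqrt_two_pow_le_one k)
          (nine_mul_add_pow_of_pellLucas_eq heq)
    _ ≤ 21 / 10 ^ (n - m) := by gcongr; norm_num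

/-- `|9 * 10^(-n) * α^k / a1 - 1| ≤ 21 / 10^(n-m)` with `α = 1 + √2`. -/
theorem pellLucas_linear_form_bound_one (k n m a1 a2 : ℕ) (hk : 150 ≤ k) (hnm : m + 2 ≤ n) (hm : 1 ≤ m)
    (ha11 : 1 ≤ a1) (ha19 : a1 ≤ 9) (ha21 : 1 ≤ a2) (ha29 : a2 ≤ 9)
    (heq : (pellLucas k : ℤ) = (a1 : ℤ) * ((10 ^ n - 1) / 9) - (a2 : ℤ) * ((10 ^ m - 1) / 9)) :
    |9 * (10 : ℝ) ^ (-(n : ℤ)) * (1 + Real.sqrt 2) ^ k / (a1 : ℝ) - 1| ≤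
      21 / 10 ^ (n - m) :=
  pellLucas_linear_form_bound_one_general k n m a1 a2 hnm ha11 ha29 heq
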